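/- arXiv:2408.12074 — 5 statements merged into one kernel-verified Lean document; each statement's English description precedes it below -/
import Mathlib

section
/- Let G be a finite group and T a proper nontrivial subgroup of G that is not normal in G. Suppose g ∈ G, and H, K are subgroups of G with H contained in the normalizer N_G(T) and K contained in the normalizer N_G(T^g) of the conjugate T^g. Then HK ≠ G (as a set product). -/
/-!
If `G = HK`, write `g = hk` with `h ∈ H ≤ N_G(T)` and `k ∈ K`. Since `h` normalizes `T`,
`T^g = T^k`; and `k` normalizes `T^k` (as `k ∈ K`), so conjugating back by `k` gives
`T^k = T`. Hence both `H` and `K` normalize `T`, so `N_G(T) ⊇ HK = G` and `T` is normal.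
-/

open scoped Pointwise

namespace Subgroup

variable {G : Type*} [Group G] {T : Subgroup G}

theorem map_conj_mul (T : Subgroup G) (a b : G) :
    T.map (MulAut.conj (a * b) : G →* G) =
      (T.map (MulAut.conj b : G →* G)).map (MulAut.conj a : G →* G) := by
  rw [map_map]
  congr 1
  ext x
  simp [mul_assoc]

theorem map_conj_inv_mul_of_mem_normalizer {h : G} (hh : h ∈ normalizer (T : Set G)) (k : G) :
    T.map (MulAut.conj (h * k)⁻¹ : G →* G) = T.map (MulAut.conj k⁻¹ : G →* G) := by
  rw [mul_inv_rev, map_conj_mul, mem_normalizer_iff_map_conj_eq.mp (inv_mem hh)]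

theorem map_conj_inv_eq_self_of_mem_normalizer {k : G}
    (hk : k ∈ normalizer (T.map (MulAut.conj k⁻¹ : G →* G) : Set G)) :
    T.map (MulAut.conj k⁻¹ : G →* G) = T := by
  rw [← mem_normalizer_iff_map_conj_eq.mp hk, ← map_conj_mul, mul_inv_cancel, map_one, MulAut.one_def,
    MulEquiv.coe_monoidHom_refl, map_id]

theorem eq_top_of_mul_eq_univ {L H K : Subgroup G} (hH : H ≤ L) (hK : K ≤ L)
    (hHK : (H : Set G) * (K : Set G) = Set.univ) : L = ⊤ := by
  refine eq_top_iff.mpr fun x _ => ?_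
  obtain ⟨h, hh, k, hk, rfl⟩ := Set.mem_mul.mp (hHK ▸ Set.mem_univ x)
  exact mul_mem (hH hh) (hK hk)

end Subgroup

theorem no_factorisation_of_normalizers_general (G : Type*) [Group G]
    (T : Subgroup G) (hnn : ¬ T.Normal)
    (g : G) (H K : Subgroup G)
    (hH : H ≤ Subgroup.normalizer (T : Set G))
    (hK : K ≤ Subgroup.normalizer ((T.map (MulAut.conj g⁻¹).toMonoidHom : Subgroup G) : Set G)) :
    (H : Set G) * (K : Set G) ≠ Set.univ := by
  intro hHK
  obtain ⟨h, hh, k, hk, rfl⟩ := Set.mem_mul.mp (hHK ▸ Set.mem_univ g)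
  rw [MulEquiv.toMonoidHom_eq_coe, Subgroup.map_conj_inv_mul_of_mem_normalizer (hH hh)] at hK
  rw [Subgroup.map_conj_inv_eq_self_of_mem_normalizer (hK hk)] at hK
  exact hnn (Subgroup.normalizer_eq_top_iff.mp (Subgroup.eq_top_of_mul_eq_univ hH hK hHK))

/-- If `T` is a proper nontrivial non-normal subgroup of a finite group `G`,
`H ≤ N_G(T)` and `K ≤ N_G(T^g)`, then `HK ≠ G`. -/
theorem no_factorisation_of_normalizers (G : Type*) [Group G] [Finite G]
    (T : Subgroup G) (hbot : T ≠ ⊥) (htop : T ≠ ⊤) (hnn : ¬ T.Normal)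
    (g : G) (H K : Subgroup G)
    (hH : H ≤ Subgroup.normalizer (T : Set G))
    (hK : K ≤ Subgroup.normalizer ((T.map (MulAut.conj g⁻¹).toMonoidHom : Subgroup G) : Set G)) :
    (H : Set G) * (K : Set G) ≠ Set.univ :=
  no_factorisation_of_normalizers_general G T hnn g H K hH hK
end

section
/- Let Γ be a digraph with a vertex-transitive automorphism group that acts s-arc-transitively for some s ≥ 2, and let L be a nontrivial normal subgroup of G ≤ Aut(Γ) that acts transitively on the vertex set. If G acts s-arc-transitively on Γ, then L acts (s-1)-arc-transitively on Γ. -/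
/-- `a` is an `s`-arc of the digraph relation `r` (only the first `s+1` terms matter). -/
def IsSArc {V : Type*} (r : V → V → Prop) (s : ℕ) (a : ℕ → V) : Prop :=
  ∀ i < s, r (a i) (a (i + 1))

/-- A subgroup `H` of `Equiv.Perm V` acts `s`-arc-transitively on the digraph `(V, r)`. -/
def SubgroupSArcTransitive {V : Type*} (r : V → V → Prop) (s : ℕ)
    (H : Subgroup (Equiv.Perm V)) : Prop :=
  ∀ a b : ℕ → V, IsSArc r s a → IsSArc r s b → ∃ g ∈ H, ∀ i ≤ s, g (a i) = b i

/-!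
Let `s = t + 1`. For an `s`-arc `b`, pick `l ∈ L` with `l (b 0) = b 1`; the orbit `i ↦ lⁱ (b 0)` is
an `s`-arc, so some `g ∈ G` carries it onto `b`, and then `g l g⁻¹ ∈ L` shifts `b` one step along
itself. Given two `t`-arcs `x` and `y`, move `x` by an element of `L` so that it ends at `y 0`; the
concatenation is a `2t`-arc, and composing `t` such shifts slides its first half onto its second.
-/

def MapsPrefix {V : Type*} (H : Subgroup (Equiv.Perm V)) (s : ℕ) (a b : ℕ → V) : Prop :=
  ∃ h ∈ H, ∀ i ≤ s, h (a i) = b i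

section

variable {V : Type*} {r : V → V → Prop}

theorem IsSArc.mono {s s' : ℕ} {a : ℕ → V} (h : IsSArc r s' a) (hs : s ≤ s') :
    IsSArc r s a :=
  fun i hi => h i (hi.trans_le hs)

theorem IsSArc.shift {s k : ℕ} {a : ℕ → V} (h : IsSArc r (s + k) a) :
    IsSArc r s (fun i => a (i + k)) := by
  intro i hi
  simpa only [Nat.add_right_comm i 1 k] using h (i + k) (by omega)

theorem IsSArc.append {s k : ℕ} {a b : ℕ → V} (ha : IsSArc r s a) (hb : IsSArc r k b)
    (hab : a s = b 0) : IsSArc r (s + k) (fun j => if j ≤ s then a j else b (j - s)) := by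
  intro j hj
  rcases lt_or_ge j s with hjs | hjs
  · simpa only [if_pos hjs.le, if_pos (Nat.succ_le_of_lt hjs)] using ha j hjs
  · have hb' := hb (j - s) (by omega)
    rw [show j - s + 1 = j + 1 - s by omega] at hb'
    rcases hjs.eq_or_lt with rfl | hjs
    · simpa only [le_refl, if_true, Nat.sub_self, hab, Nat.not_succ_le_self, if_false] using hb'
    · simpa only [Nat.not_le.mpr hjs, Nat.not_le.mpr (Nat.lt_succ_of_lt hjs), if_false] using hb'

theorem isSArc_pow_apply {l : Equiv.Perm V} (hl : ∀ a b, r a b → r (l a) (l b)) {v : V}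
    (hv : r v (l v)) (s : ℕ) : IsSArc r s (fun i => (l ^ i) v) := by
  suffices h : ∀ i, r ((l ^ i) v) ((l ^ (i + 1)) v) from fun i _ => h i
  intro i
  induction i with
  | zero => simpa using hv
  | succ i ih =>
    simp only [pow_succ' l (i + 1), pow_succ' l i, Equiv.Perm.mul_apply] at ih ⊢
    exact hl _ _ ih

end

namespace MapsPrefix

variable {V : Type*} {H : Subgroup (Equiv.Perm V)} {s : ℕ} {a b c : ℕ → V}

theorem refl (a : ℕ → V) : MapsPrefix H s a a :=
  ⟨1, H.one_mem, fun _ _ => rfl⟩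

theorem trans (hab : MapsPrefix H s a b) (hbc : MapsPrefix H s b c) : MapsPrefix H s a c := by
  obtain ⟨g, hg, hgab⟩ := hab
  obtain ⟨h, hh, hhbc⟩ := hbc
  exact ⟨h * g, H.mul_mem hh hg, fun i hi => by
    rw [Equiv.Perm.mul_apply, hgab i hi, hhbc i hi]⟩

theorem congr {a' b' : ℕ → V} (h : MapsPrefix H s a b) (ha : ∀ i ≤ s, a i = a' i)
    (hb : ∀ i ≤ s, b i = b' i) : MapsPrefix H s a' b' := by
  obtain ⟨g, hg, hgab⟩ := h
  exact ⟨g, hg, fun i hi => by rw [← ha i hi, ← hb i hi, hgab i hi]⟩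

theorem iterate_shift {r : V → V → Prop}
    (hshift : ∀ b, IsSArc r (s + 1) b → MapsPrefix H s b (fun i => b (i + 1)))
    (k : ℕ) {u : ℕ → V} (hu : IsSArc r (s + k) u) : MapsPrefix H s u (fun i => u (i + k)) := by
  induction k with
  | zero => exact refl u
  | succ k ih =>
    refine (ih (hu.mono (by omega))).trans ?_
    have hwindow : IsSArc r (s + 1) (fun i => u (i + k)) :=
      IsSArc.shift (by rwa [Nat.add_right_comm s 1 k])
    simpa only [Nat.add_assoc, Nat.add_comm 1 k] using hshift _ hwindow

end MapsPrefix

section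

variable {V : Type*} {r : V → V → Prop} {G L : Subgroup (Equiv.Perm V)}

theorem mapsPrefix_succ_of_normal (hpres : ∀ g ∈ G, ∀ a b, r a b → r (g a) (g b))
    (hLG : L ≤ G) (hnorm : ∀ g ∈ G, ∀ l ∈ L, g * l * g⁻¹ ∈ L)
    (hLtrans : ∀ v w : V, ∃ l ∈ L, l v = w) {s : ℕ} (hGs : SubgroupSArcTransitive r (s + 1) G)
    {b : ℕ → V} (hb : IsSArc r (s + 1) b) : MapsPrefix L s b (fun i => b (i + 1)) := by
  obtain ⟨l, hlL, hl⟩ := hLtrans (b 0) (b 1)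
  have horbit : IsSArc r (s + 1) (fun i => (l ^ i) (b 0)) :=
    isSArc_pow_apply (hpres l (hLG hlL)) (by simpa [hl] using hb 0 (by omega)) _
  obtain ⟨g, hgG, hg⟩ := hGs _ b horbit hb
  refine ⟨g * l * g⁻¹, hnorm g hgG l hlL, fun i hi => ?_⟩
  have hgi : g⁻¹ (b i) = (l ^ i) (b 0) := by
    rw [Equiv.Perm.inv_eq_iff_eq, hg i (by omega)]
  calc (g * l * g⁻¹) (b i) = g ((l ^ (i + 1)) (b 0)) := by
        rw [Equiv.Perm.mul_apply, Equiv.Perm.mul_apply, hgi, pow_succ', Equiv.Perm.mul_apply]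
    _ = b (i + 1) := hg (i + 1) (by omega)

theorem subgroupSArcTransitive_of_normal (hpres : ∀ g ∈ G, ∀ a b, r a b → r (g a) (g b))
    (hLG : L ≤ G) (hnorm : ∀ g ∈ G, ∀ l ∈ L, g * l * g⁻¹ ∈ L)
    (hLtrans : ∀ v w : V, ∃ l ∈ L, l v = w) {t : ℕ} (hGs : SubgroupSArcTransitive r (t + 1) G) :
    SubgroupSArcTransitive r t L := by
  intro x y hx hy
  obtain ⟨n, hnL, hn⟩ := hLtrans (x t) (y 0)
  have hnx : IsSArc r t (fun i => n (x i)) := fun i hi => hpres n (hLG hnL) _ _ (hx i hi)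
  set u : ℕ → V := fun j => if j ≤ t then n (x j) else y (j - t) with hu_def
  have hu : IsSArc r (t + t) u := hnx.append hy hn
  have hslide : MapsPrefix L t u (fun i => u (i + t)) :=
    MapsPrefix.iterate_shift
      (fun _ hb => mapsPrefix_succ_of_normal hpres hLG hnorm hLtrans hGs hb) t hu
  have hxu : MapsPrefix L t x u :=
    ⟨n, hnL, fun i hi => by simp only [hu_def, if_pos hi]⟩
  refine hxu.trans (hslide.congr (fun _ _ => rfl) fun i _ => ?_)
  rcases Nat.eq_zero_or_pos i with rfl | hi
  · simp [hu_def, hn]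
  · simp [hu_def, Nat.not_le.mpr (Nat.lt_add_of_pos_left hi)]

end

theorem normal_vertex_transitive_subgroup_sArcTransitive_general {V : Type*}
    (r : V → V → Prop)
    (G L : Subgroup (Equiv.Perm V))
    (hpres : ∀ g ∈ G, ∀ a b : V, r a b ↔ r (g a) (g b))
    (hLG : L ≤ G) (hnorm : ∀ g ∈ G, ∀ l ∈ L, g * l * g⁻¹ ∈ L)
    (s : ℕ) (hs : 2 ≤ s)
    (hLtrans : ∀ v w : V, ∃ l ∈ L, l v = w)
    (hGs : SubgroupSArcTransitive r s G) :
    SubgroupSArcTransitive r (s - 1) L := by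
  obtain ⟨t, rfl⟩ : ∃ t, s = t + 1 := ⟨s - 1, by omega⟩
  exact subgroupSArcTransitive_of_normal (fun g hg a b => (hpres g hg a b).mp) hLG hnorm hLtrans
    hGs

/-- If `G` acts `s`-arc-transitively (`s ≥ 2`) on a digraph and `L` is a nontrivial
normal subgroup of `G` that is vertex-transitive, then `L` is `(s-1)`-arc-transitive. -/
theorem normal_vertex_transitive_subgroup_sArcTransitive {V : Type*}
    (r : V → V → Prop)
    (hirr : ∀ v : V, ¬ r v v) (hanti : ∀ a b : V, r a b → ¬ r b a)
    (G L : Subgroup (Equiv.Perm V))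
    (hpres : ∀ g ∈ G, ∀ a b : V, r a b ↔ r (g a) (g b))
    (hLG : L ≤ G) (hnorm : ∀ g ∈ G, ∀ l ∈ L, g * l * g⁻¹ ∈ L) (hL : L ≠ ⊥)
    (s : ℕ) (hs : 2 ≤ s)
    (hGtrans : ∀ v w : V, ∃ g ∈ G, g v = w)
    (hLtrans : ∀ v w : V, ∃ l ∈ L, l v = w)
    (hGs : SubgroupSArcTransitive r s G) :
    SubgroupSArcTransitive r (s - 1) L :=
  normal_vertex_transitive_subgroup_sArcTransitive_general r G L hpres hLG hnorm s hs hLtrans hGs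
end

section
/- Let Γ be a digraph and v_0 → v_1 → ... → v_s an s-arc with s ≥ 2, and suppose G ≤ Aut(Γ) acts arc-transitively on Γ. Then G acts s-arc-transitively on Γ if and only if for each i ∈ {1, ..., s-1}, the stabiliser of the path (v_1,...,v_i) factorises as G_{v_1...v_i} = G_{v_0 v_1...v_i} · G_{v_1...v_i v_{i+1}}. -/
open scoped Pointwise

/-- The group `G` acts `s`-arc-transitively on the digraph `(V, r)`. -/
def GSArcTransitive (G : Type*) {V : Type*} [Group G] [MulAction G V]
    (r : V → V → Prop) (s : ℕ) : Prop :=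
  ∀ a b : ℕ → V, IsSArc r s a → IsSArc r s b → ∃ g : G, ∀ i ≤ s, g • a i = b i

section Aux

variable {V G : Type*} [Group G] [MulAction G V] {r : V → V → Prop}

lemma isSArc_mono {s t : ℕ} (h : t ≤ s) {a : ℕ → V} (ha : IsSArc r s a) : IsSArc r t a :=
  fun i hi => ha i (lt_of_lt_of_le hi h)

lemma arc_to_pair (harc : GSArcTransitive G r 1) {x y u w : V} (hxy : r x y) (huw : r u w) :
    ∃ g : G, g • x = u ∧ g • y = w := by
  obtain ⟨g, hg⟩ := harc (fun n => if n = 0 then x else y) (fun n => if n = 0 then u else w)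
    (by intro i hi; interval_cases i; simpa using hxy)
    (by intro i hi; interval_cases i; simpa using huw)
  exact ⟨g, by simpa using hg 0 (by norm_num), by simpa using hg 1 le_rfl⟩

lemma mem_Icc_stab {v : ℕ → V} {a b : ℕ} {g : G} :
    g ∈ (⨅ j ∈ Finset.Icc a b, MulAction.stabilizer G (v j)) ↔
      ∀ j, a ≤ j → j ≤ b → g • v j = v j := by
  simp [Subgroup.mem_iInf, Finset.mem_Icc, MulAction.mem_stabilizer_iff, and_imp]

lemma extend_arc (hpres : ∀ (g : G) (a b : V), r a b ↔ r (g • a) (g • b))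
    (harc : GSArcTransitive G r 1) {p q w : V} (hpq : r p q) (hqw : r q w)
    (t : ℕ) (a : ℕ → V) (ht : 1 ≤ t) (ha : IsSArc r t a) :
    ∃ b : ℕ → V, IsSArc r (t + 1) b ∧ ∀ i ≤ t, b i = a i := by
  have hlast : r (a (t - 1)) (a t) := by
    have h1 := ha (t - 1) (by omega)
    have h2 : t - 1 + 1 = t := by omega
    rwa [h2] at h1
  obtain ⟨g, hg0, hg1⟩ := arc_to_pair harc hlast hpq
  refine ⟨fun i => if i ≤ t then a i else g⁻¹ • w, ?_, fun i hi => by simp [hi]⟩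
  intro i hi
  dsimp only
  rcases lt_or_eq_of_le (Nat.lt_succ_iff.mp hi) with h | h
  · rw [if_pos (by omega : i ≤ t), if_pos (by omega : i + 1 ≤ t)]
    exact ha i h
  · rw [h, if_pos le_rfl, if_neg (by omega : ¬ t + 1 ≤ t)]
    have hr : r (g⁻¹ • q) (g⁻¹ • w) := (hpres g⁻¹ q w).mp hqw
    have hq : g⁻¹ • q = a t := by rw [← hg1]; simp
    rwa [hq] at hr

lemma extend_many (hpres : ∀ (g : G) (a b : V), r a b ↔ r (g • a) (g • b))
    (harc : GSArcTransitive G r 1) {p q w : V} (hpq : r p q) (hqw : r q w) :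
    ∀ (k t : ℕ) (a : ℕ → V), 1 ≤ t → IsSArc r t a →
      ∃ b : ℕ → V, IsSArc r (t + k) b ∧ ∀ i ≤ t, b i = a i := by
  intro k
  induction k with
  | zero => exact fun t a ht ha => ⟨a, ha, fun _ _ => rfl⟩
  | succ k ih =>
    intro t a ht ha
    obtain ⟨b, hb, hab⟩ := ih t a ht ha
    obtain ⟨c, hc, hbc⟩ := extend_arc hpres harc hpq hqw (t + k) b (by omega) hb
    exact ⟨c, hc, fun i hi => (hbc i (by omega)).trans (hab i hi)⟩

lemma trans_down (hpres : ∀ (g : G) (a b : V), r a b ↔ r (g • a) (g • b))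
    (harc : GSArcTransitive G r 1) {p q w : V} (hpq : r p q) (hqw : r q w)
    {s : ℕ} (hst : GSArcTransitive G r s) (t : ℕ) (ht : 1 ≤ t) (hts : t ≤ s) :
    GSArcTransitive G r t := by
  intro a b ha hb
  obtain ⟨a', ha', haa⟩ := extend_many hpres harc hpq hqw (s - t) t a ht ha
  obtain ⟨b', hb', hbb⟩ := extend_many hpres harc hpq hqw (s - t) t b ht hb
  have hts' : t + (s - t) = s := by omega
  rw [hts'] at ha' hb'
  obtain ⟨g, hg⟩ := hst a' b' ha' hb'
  refine ⟨g, fun i hi => ?_⟩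
  have := hg i (hi.trans hts)
  rwa [haa i hi, hbb i hi] at this

end Aux

/-- If `G` is arc-transitive on a digraph with an `s`-arc `v_0 → ⋯ → v_s` (`s ≥ 2`),
then `G` is `s`-arc-transitive iff `G_{v_1⋯v_i} = G_{v_0 v_1⋯v_i} G_{v_1⋯v_i v_{i+1}}`
for each `1 ≤ i ≤ s - 1`. -/
theorem sArcTransitive_iff_stabiliser_factorisations {V G : Type*} [Group G]
    [MulAction G V] (r : V → V → Prop)
    (hirr : ∀ v : V, ¬ r v v) (hanti : ∀ a b : V, r a b → ¬ r b a)
    (hpres : ∀ (g : G) (a b : V), r a b ↔ r (g • a) (g • b))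
    (harc : GSArcTransitive G r 1)
    (s : ℕ) (hs : 2 ≤ s) (v : ℕ → V) (hv : IsSArc r s v) :
    GSArcTransitive G r s ↔
      ∀ i : ℕ, 1 ≤ i → i ≤ s - 1 →
        ((⨅ j ∈ Finset.Icc 1 i, MulAction.stabilizer G (v j) : Subgroup G) : Set G) =
          ((⨅ j ∈ Finset.Icc 0 i, MulAction.stabilizer G (v j) : Subgroup G) : Set G) *
            ((⨅ j ∈ Finset.Icc 1 (i + 1), MulAction.stabilizer G (v j) : Subgroup G) :
              Set G) := by
  have hpq : r (v 0) (v 1) := hv 0 (by omega)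
  have hqw : r (v 1) (v 2) := hv 1 (by omega)
  constructor
  · intro hst i hi1 his
    have hi1s : i + 1 ≤ s := by omega
    ext g
    simp only [Set.mem_mul, SetLike.mem_coe, mem_Icc_stab]
    constructor
    · intro hg
      set B : ℕ → V := fun n => if n = i + 1 then g • v (i + 1) else v n with hB
      have hBeq : ∀ j : ℕ, j ≠ i + 1 → B j = v j := fun j hj => if_neg hj
      have hBtop : B (i + 1) = g • v (i + 1) := if_pos rfl
      have hBarc : IsSArc r (i + 1) B := by
        intro j hj
        rcases Nat.lt_succ_iff_lt_or_eq.mp hj with h | h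
        · rw [hBeq j (by omega), hBeq (j + 1) (by omega)]
          exact hv j (by omega)
        · rw [h, hBeq i (by omega), hBtop]
          have hr : r (g • v i) (g • v (i + 1)) := (hpres g _ _).mp (hv i (by omega))
          rwa [hg i hi1 le_rfl] at hr
      obtain ⟨g1, hg1⟩ := trans_down hpres harc hpq hqw hst (i + 1) (by omega) hi1s v B
        (isSArc_mono hi1s hv) hBarc
      have hg1fix : ∀ j ≤ i, g1 • v j = v j := by
        intro j hj
        have h1 := hg1 j (by omega)
        rwa [hBeq j (by omega)] at h1
      have hg1top : g1 • v (i + 1) = g • v (i + 1) := by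
        have h1 := hg1 (i + 1) le_rfl
        rwa [hBtop] at h1
      refine ⟨g1, fun j _ hj => hg1fix j hj, g1⁻¹ * g, ?_, by group⟩
      intro j hj1 hj2
      rcases eq_or_lt_of_le hj2 with h | h
      · subst h
        rw [mul_smul, ← hg1top, inv_smul_smul]
      · rw [mul_smul, hg j hj1 (by omega), inv_smul_eq_iff, hg1fix j (by omega)]
    · rintro ⟨x, hx, y, hy, rfl⟩
      intro j hj1 hj2
      rw [mul_smul, hy j hj1 (by omega), hx j (by omega) hj2]
  · intro H
    have key : ∀ t, 1 ≤ t → t ≤ s → GSArcTransitive G r t := by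
      intro t
      induction t with
      | zero => omega
      | succ t ih =>
        intro _ hts
        rcases Nat.eq_zero_or_pos t with h0 | hpos
        · subst h0; exact harc
        · have htt : GSArcTransitive G r t := ih hpos (by omega)
          have toV : ∀ a : ℕ → V, IsSArc r (t + 1) a → ∃ m : G, ∀ j ≤ t + 1, m • a j = v j := by
            intro a ha
            obtain ⟨g, hg⟩ := htt a v (isSArc_mono (by omega) ha) (isSArc_mono (by omega) hv)
            obtain ⟨h, hh⟩ := htt (fun n => a (n + 1)) (fun n => v (n + 1))
              (fun j hj => ha (j + 1) (by omega)) (fun j hj => hv (j + 1) (by omega))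
            have hha : ∀ j, 1 ≤ j → j ≤ t + 1 → h • a j = v j := by
              intro j hj1 hj2
              have h1 := hh (j - 1) (by omega)
              have h2 : j - 1 + 1 = j := by omega
              simpa [h2] using h1
            have hk : (g * h⁻¹) ∈ (⨅ j ∈ Finset.Icc 1 t, MulAction.stabilizer G (v j)) := by
              rw [mem_Icc_stab]
              intro j hj1 hj2
              have h1 : h⁻¹ • v j = a j := by
                rw [← hha j hj1 (by omega), inv_smul_smul]
              rw [mul_smul, h1, hg j (by omega)]
            have hk2 : (g * h⁻¹) ∈
                ((⨅ j ∈ Finset.Icc 0 t, MulAction.stabilizer G (v j) : Subgroup G) : Set G) *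
                ((⨅ j ∈ Finset.Icc 1 (t + 1), MulAction.stabilizer G (v j) : Subgroup G) :
                  Set G) := by
              rw [← H t hpos (by omega)]; exact hk
            obtain ⟨x, hx, y, hy, hxy⟩ := hk2
            refine ⟨y * h, ?_⟩
            have hm : y * h = x⁻¹ * g := by
              have h1 : x * y = g * h⁻¹ := hxy
              have h2 : x * (y * h) = g := by
                rw [← mul_assoc, h1]; group
              rw [← h2]; group
            rw [SetLike.mem_coe, mem_Icc_stab] at hx hy
            intro j hj
            rcases Nat.eq_zero_or_pos j with hj0 | hj1
            · subst hj0
              rw [hm, mul_smul, hg 0 (by omega), inv_smul_eq_iff, hx 0 le_rfl (by omega)]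
            · rcases Nat.lt_or_ge j (t + 1) with hlt | hge
              · rw [hm, mul_smul, hg j (by omega), inv_smul_eq_iff, hx j (by omega) (by omega)]
              · rw [mul_smul, hha j hj1 hj, hy j hj1 hj]
          intro a b ha hb
          obtain ⟨m, hm⟩ := toV a ha
          obtain ⟨m', hm'⟩ := toV b hb
          refine ⟨m'⁻¹ * m, fun j hj => ?_⟩
          rw [mul_smul, hm j hj, ← hm' j hj, inv_smul_smul]
    exact key s (by omega) le_rfl
end

section
/- Let G = T wr S_k = T^k : S_k be a wreath product of a finite group T with S_k acting by permuting coordinates, with base group M = T_1 × ... × T_k. Suppose G = AB with A ≅ B (proper subgroups), and A projects onto a transitive subgroup of S_k (i.e., A acts transitively on {T_1,...,T_k} by conjugation). Then for any odd prime p dividing |T|, the p-part of the first coordinate projection of A ∩ M satisfies |φ_1(A ∩ M)|_p^2 ≥ |T|_p. -/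
/-!
`A` acts transitively on the cosets of `B`, so `|G : B|` divides `|A|` and `|T|^k k! = |G|`
divides `|A| |B| = |A|²`. On the other hand `|A| = |A M/M| |A ∩ M|` divides `k! ∏ᵢ |φᵢ(A ∩ M)|`,
and transitivity of `A` on the components makes all the `φᵢ(A ∩ M)` conjugate in `T`, so `|A|`
divides `k! |φ₁(A ∩ M)|^k`. Comparing `p`-adic valuations gives
`k v_p|T| + v_p(k!) ≤ 2 v_p(k!) + 2k v_p|φ₁(A ∩ M)|`, and Legendre's formula gives `2 v_p(k!) ≤ k`
for odd `p`, whence `v_p|T| ≤ 2 v_p|φ₁(A ∩ M)|`.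
-/

open scoped Pointwise

/-- The permutation action of `S_k` on `Fin k → T` by permuting coordinates, as a
homomorphism into the automorphism group (used to build the wreath product). -/
def permCoordAut (T : Type*) [Group T] (k : ℕ) :
    Equiv.Perm (Fin k) →* MulAut (Fin k → T) where
  toFun g := MulEquiv.arrowCongr g (MulEquiv.refl T)
  map_one' := by ext f i; rfl
  map_mul' g h := by ext f i; rfl

/-- The wreath product `T wr S_k` as a semidirect product `(Fin k → T) ⋊ S_k`. -/
abbrev WreathProductSk (T : Type*) [Group T] (k : ℕ) :=
  SemidirectProduct (Fin k → T) (Equiv.Perm (Fin k)) (permCoordAut T k)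

/-- The projection `φ_i(A ∩ M)` of `A ∩ M` to the `i`-th component of the base group
`M` of the wreath product, as a subgroup of `T`. -/
def baseProjection {T : Type*} [Group T] {k : ℕ} (A : Subgroup (WreathProductSk T k))
    (i : Fin k) : Subgroup T :=
  ((A ⊓ SemidirectProduct.inl.range).comap SemidirectProduct.inl).map
    (Pi.evalMonoidHom (fun _ : Fin k => T) i)

open scoped Nat

theorem Nat.two_mul_factorization_factorial_le {p : ℕ} (hp : p.Prime) (hodd : Odd p) (k : ℕ) :
    2 * (k !).factorization p ≤ k := by
  have hp3 : 2 ≤ p - 1 := by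
    have := hp.two_le
    obtain ⟨m, rfl⟩ := hodd
    omega
  calc 2 * (k !).factorization p ≤ (p - 1) * (k !).factorization p := Nat.mul_le_mul_right _ hp3
    _ = k - (p.digits k).sum := Nat.sub_one_mul_factorization_factorial hp
    _ ≤ k := Nat.sub_le _ _

theorem Nat.factorization_le_two_mul_of_pow_mul_factorial_dvd {p k t n : ℕ} (hp : p.Prime)
    (hodd : Odd p) (hk : 0 < k) (ht : t ≠ 0) (hn : n ≠ 0)
    (h : t ^ k * k ! ∣ (k ! * n ^ k) ^ 2) :
    t.factorization p ≤ 2 * n.factorization p := by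
  have hle := (Nat.factorization_le_iff_dvd (by positivity) (by positivity)).mpr h p
  simp only [Nat.factorization_mul (pow_ne_zero _ ht) (factorial_ne_zero k),
    Nat.factorization_pow, Nat.factorization_mul (factorial_ne_zero k) (pow_ne_zero _ hn),
    Finsupp.coe_add, Finsupp.coe_smul, Pi.add_apply, Pi.smul_apply, smul_eq_mul] at hle
  have hfac := Nat.two_mul_factorization_factorial_le hp hodd k
  have hmul : k * (2 * t.factorization p) ≤ k * (4 * n.factorization p + 1) := by linarith
  have := Nat.le_of_mul_le_mul_left hmul hk
  omega

namespace Subgroup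

variable {G : Type*} [Group G]

theorem card_dvd_card_mul_card_of_mul_eq_univ {A B : Subgroup G}
    (h : (A : Set G) * (B : Set G) = Set.univ) : Nat.card G ∣ Nat.card A * Nat.card B := by
  have : MulAction.IsPretransitive A (G ⧸ B) := by
    refine MulAction.IsPretransitive.of_orbit (x₀ := ((1 : G) : G ⧸ B)) fun x => ?_
    induction x using QuotientGroup.induction_on with
    | H g =>
      obtain ⟨a, ha, b, hb, rfl⟩ : g ∈ (A : Set G) * (B : Set G) := h ▸ Set.mem_univ g
      refine ⟨⟨a, ha⟩, (QuotientGroup.eq).mpr ?_⟩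
      simpa using hb
  rw [← B.index_mul_card, index_eq_card,
    ← MulAction.index_stabilizer_of_transitive A ((1 : G) : G ⧸ B)]
  exact mul_dvd_mul_right (index_dvd_card _) _

theorem card_inf_mul_relIndex (H K : Subgroup G) :
    Nat.card (H ⊓ K : Subgroup G) * H.relIndex K = Nat.card K := by
  rw [← relIndex_bot_left, ← relIndex_bot_left, ← inf_relIndex_right H K,
    relIndex_mul_relIndex _ _ _ bot_le inf_le_right]

theorem card_inf_ker_mul_card_map {G' : Type*} [Group G'] (f : G →* G') (H : Subgroup G) :
    Nat.card (f.ker ⊓ H : Subgroup G) * Nat.card (H.map f) = Nat.card H := by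
  rw [← relIndex_ker, card_inf_mul_relIndex]

theorem card_comap_of_injective {G' : Type*} [Group G'] {f : G →* G'} (hf : Function.Injective f)
    (H : Subgroup G') : Nat.card (H.comap f) = Nat.card (f.range ⊓ H : Subgroup G') := by
  rw [← map_comap_eq, card_map_of_injective hf]

theorem card_pi {ι : Type*} [Fintype ι] {G : ι → Type*} [∀ i, Group (G i)]
    (H : ∀ i, Subgroup (G i)) : Nat.card (pi Set.univ H) = ∏ i, Nat.card (H i) := by
  rw [← Nat.card_pi]
  exact Nat.card_congr (Equiv.Set.univPi fun i => (H i : Set (G i)))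

theorem card_dvd_prod_card_map_eval {ι : Type*} [Fintype ι] {G : ι → Type*} [∀ i, Group (G i)]
    (K : Subgroup (∀ i, G i)) : Nat.card K ∣ ∏ i, Nat.card (K.map (Pi.evalMonoidHom G i)) := by
  rw [← card_pi]
  exact card_dvd_of_le (le_pi_iff.mpr fun i _ => (gc_map_comap _).le_u_l K)

end Subgroup

namespace WreathProductSk

variable {T : Type*} [Group T] {k : ℕ}

theorem card : Nat.card (WreathProductSk T k) = Nat.card T ^ k * k ! := by
  rw [SemidirectProduct.card, Nat.card_pi, Nat.card_perm]
  simp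

theorem conj_inl (a : WreathProductSk T k) (g : Fin k → T) :
    a * SemidirectProduct.inl g * a⁻¹ =
      SemidirectProduct.inl (fun j => a.left j * g (a.right⁻¹ j) * (a.left j)⁻¹) := by
  ext j
  · simp only [SemidirectProduct.mul_left, SemidirectProduct.inv_left, SemidirectProduct.left_inl,
      SemidirectProduct.mul_right, SemidirectProduct.right_inl]
    simp [permCoordAut, Equiv.Perm.inv_def]
  · simp

end WreathProductSk

section baseProjection

variable {T : Type*} [Group T] {k : ℕ} {A : Subgroup (WreathProductSk T k)}

theorem mem_baseProjection {i : Fin k} {x : T} :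
    x ∈ baseProjection A i ↔ ∃ g : Fin k → T, SemidirectProduct.inl g ∈ A ∧ g i = x := by
  simp [baseProjection]

theorem baseProjection_map_conj_le {a : WreathProductSk T k} (ha : a ∈ A) {i j : Fin k}
    (hij : a.right i = j) :
    (baseProjection A i).map (MulAut.conj (a.left j)).toMonoidHom ≤ baseProjection A j := by
  rintro _ ⟨_, hx, rfl⟩
  obtain ⟨g, hg, rfl⟩ := mem_baseProjection.mp hx
  have hji : a.right⁻¹ j = i := Equiv.Perm.inv_eq_iff_eq.mpr hij.symm
  refine mem_baseProjection.mpr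
    ⟨fun j' => a.left j' * g (a.right⁻¹ j') * (a.left j')⁻¹, ?_, by simp [hji]⟩
  rw [← WreathProductSk.conj_inl]
  exact A.mul_mem (A.mul_mem ha hg) (A.inv_mem ha)

theorem card_baseProjection_eq_of_transitive [Finite T]
    (htrans : ∀ i j : Fin k, ∃ σ ∈ A.map SemidirectProduct.rightHom, σ i = j) (i j : Fin k) :
    Nat.card (baseProjection A i) = Nat.card (baseProjection A j) := by
  suffices ∀ i j, Nat.card (baseProjection A i) ≤ Nat.card (baseProjection A j) from
    (this i j).antisymm (this j i)
  intro i j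
  obtain ⟨_, ⟨a, ha, rfl⟩, hij⟩ := htrans i j
  rw [← Subgroup.card_map_of_injective (f := (MulAut.conj (a.left j)).toMonoidHom)
    (MulAut.conj (a.left j)).injective]
  exact Subgroup.card_le_of_le (baseProjection_map_conj_le ha hij)

theorem card_dvd_factorial_mul_prod_card_baseProjection (A : Subgroup (WreathProductSk T k)) :
    Nat.card A ∣ k ! * ∏ i, Nat.card (baseProjection A i) := by
  rw [← Subgroup.card_inf_ker_mul_card_map SemidirectProduct.rightHom A,
    ← SemidirectProduct.range_inl_eq_ker_rightHom, mul_comm]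
  refine mul_dvd_mul ?_ ?_
  · exact (Subgroup.card_subgroup_dvd_card _).trans (by rw [Nat.card_perm, Nat.card_fin])
  · have hcomap : A.comap SemidirectProduct.inl =
        (A ⊓ SemidirectProduct.inl.range).comap SemidirectProduct.inl := by
      simp [Subgroup.comap_inf]
    rw [← Subgroup.card_comap_of_injective SemidirectProduct.inl_injective, hcomap]
    exact Subgroup.card_dvd_prod_card_map_eval _

end baseProjection

theorem wreath_homogeneous_factorisation_p_part_general {T : Type*} [Group T] [Finite T]
    (k : ℕ) (hk : 0 < k)
    (A B : Subgroup (WreathProductSk T k))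
    (hiso : Nonempty (A ≃* B))
    (hfact : (A : Set (WreathProductSk T k)) * (B : Set (WreathProductSk T k)) =
      Set.univ)
    (htrans : ∀ i j : Fin k, ∃ σ ∈ A.map SemidirectProduct.rightHom, σ i = j)
    (p : ℕ) (hp : p.Prime) (hodd : Odd p) :
    (Nat.card T).factorization p ≤
      2 * (Nat.card (baseProjection A ⟨0, hk⟩)).factorization p := by
  have hG : Nat.card T ^ k * k ! ∣ Nat.card A ^ 2 := by
    rw [← WreathProductSk.card, sq]
    nth_rw 2 [Nat.card_congr hiso.some.toEquiv]
    exact Subgroup.card_dvd_card_mul_card_of_mul_eq_univ hfact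
  have hA : Nat.card A ∣ k ! * Nat.card (baseProjection A ⟨0, hk⟩) ^ k := by
    simpa [card_baseProjection_eq_of_transitive htrans _ ⟨0, hk⟩] using
      card_dvd_factorial_mul_prod_card_baseProjection A
  exact Nat.factorization_le_two_mul_of_pow_mul_factorial_dvd hp hodd hk Nat.card_pos.ne'
    Nat.card_pos.ne' (hG.trans (pow_dvd_pow_of_dvd hA 2))

/-- For a homogeneous factorisation `G = AB` of `G = T wr S_k` with `A` transitive on
the `k` components, and any odd prime `p` dividing `|T|`, the `p`-part of the first
coordinate projection of `A ∩ M` satisfies `|φ₁(A ∩ M)|_p ^ 2 ≥ |T|_p`. -/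
theorem wreath_homogeneous_factorisation_p_part {T : Type*} [Group T] [Finite T]
    (k : ℕ) (hk : 0 < k)
    (A B : Subgroup (WreathProductSk T k)) (hA : A ≠ ⊤) (hB : B ≠ ⊤)
    (hiso : Nonempty (A ≃* B))
    (hfact : (A : Set (WreathProductSk T k)) * (B : Set (WreathProductSk T k)) =
      Set.univ)
    (htrans : ∀ i j : Fin k, ∃ σ ∈ A.map SemidirectProduct.rightHom, σ i = j)
    (p : ℕ) (hp : p.Prime) (hodd : Odd p) (hpT : p ∣ Nat.card T) :
    (Nat.card T).factorization p ≤
      2 * (Nat.card (baseProjection A ⟨0, hk⟩)).factorization p :=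
  wreath_homogeneous_factorisation_p_part_general k hk A B hiso hfact htrans p hp hodd
end

section
/- Let n ≥ 3 and let G be a group with A_n ≤ G ≤ S_n acting naturally on a set Ω of size n. If G = AB for subgroups A, B of G, then at least one of A or B acts transitively on Ω. -/
/-!
Suppose neither factor is transitive; let `Δ` be an `A`-orbit and `Γ` a `B`-orbit, both proper.
The number `|gΔ ∩ Γ|` only depends on the double coset `BgA`, so it is constant on `G = BA`.
Some transposition `t` moves a point of `Δ` out of `Δ` and changes this number by one, and since
`n ≥ 3` some transposition `s` stabilises `Γ`; then `st` is even, hence in `G`, but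
`|stΔ ∩ Γ| = |tΔ ∩ Γ| ≠ |Δ ∩ Γ|`.
-/

open scoped Pointwise
open MulAction Equiv Set

namespace MulAction

variable {G α : Type*} [Group G] [MulAction G α]

theorem le_stabilizer_orbit (H : Subgroup G) (a : α) : H ≤ stabilizer G (orbit H a) :=
  fun g hg => mem_stabilizer_iff.2 (smul_orbit (⟨g, hg⟩ : H) a)

theorem ncard_smul_inter_of_mem_stabilizer {b : G} {Γ : Set α} (hb : b ∈ stabilizer G Γ)
    (Δ : Set α) : (b • Δ ∩ Γ).ncard = (Δ ∩ Γ).ncard := by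
  conv_lhs => rw [← mem_stabilizer_iff.1 hb]
  rw [← smul_set_inter, ncard_smul_set]

theorem ncard_smul_inter_of_mem_mul {A B : Subgroup G} {Δ Γ : Set α}
    (hA : A ≤ stabilizer G Δ) (hB : B ≤ stabilizer G Γ) {g : G} (hg : g ∈ (B : Set G) * A) :
    (g • Δ ∩ Γ).ncard = (Δ ∩ Γ).ncard := by
  obtain ⟨b, hb, a, ha, rfl⟩ := hg
  rw [mul_smul, mem_stabilizer_iff.1 (hA ha), ncard_smul_inter_of_mem_stabilizer (hB hb)]

end MulAction

theorem Set.exists_mem_notMem_mem_iff_notMem {α : Type*} {Δ Γ : Set α} {a b c d : α}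
    (ha : a ∈ Δ) (hb : b ∉ Δ) (hc : c ∈ Γ) (hd : d ∉ Γ) : ∃ x ∈ Δ, ∃ y ∉ Δ, (x ∈ Γ ↔ y ∉ Γ) := by
  -- otherwise membership in `Γ` would be the same for all points, contradicting `c` and `d`
  by_contra! h
  grind

namespace Equiv.Perm

variable {α : Type*} [DecidableEq α]

theorem exists_swap_mem_stabilizer [Finite α] (h : 3 ≤ Nat.card α) (Γ : Set α) :
    ∃ x y : α, x ≠ y ∧ swap x y ∈ stabilizer (Perm α) Γ := by
  have hsum := ncard_add_ncard_compl Γ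
  obtain hΓ | hΓ : 1 < Γ.ncard ∨ 1 < Γᶜ.ncard := by omega
  · obtain ⟨x, y, hx, hy, hxy⟩ := (one_lt_ncard_iff (toFinite _)).1 hΓ
    exact ⟨x, y, hxy, Equiv.swap_mem_stabilizer.2 (iff_of_true hx hy)⟩
  · obtain ⟨x, y, hx, hy, hxy⟩ := (one_lt_ncard_iff (toFinite _)).1 hΓ
    exact ⟨x, y, hxy, Equiv.swap_mem_stabilizer.2 (iff_of_false hx hy)⟩

theorem ncard_swap_smul_inter_ne [Finite α] {Δ Γ : Set α} {x y : α} (hx : x ∈ Δ) (hy : y ∉ Δ)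
    (hxy : x ∈ Γ ↔ y ∉ Γ) : (swap x y • Δ ∩ Γ).ncard ≠ (Δ ∩ Γ).ncard := by
  change (swap x y '' Δ ∩ Γ).ncard ≠ _
  rw [image_swap_of_mem_of_notMem hx hy]
  by_cases hxΓ : x ∈ Γ
  · have : (insert y Δ \ {x}) ∩ Γ = (Δ ∩ Γ) \ {x} := by
      ext z; aesop
    rw [this, ncard_sdiff_singleton_of_mem (show x ∈ Δ ∩ Γ from ⟨hx, hxΓ⟩)]
    have : 0 < (Δ ∩ Γ).ncard := (ncard_pos (toFinite _)).2 ⟨x, hx, hxΓ⟩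
    omega
  · have : (insert y Δ \ {x}) ∩ Γ = insert y (Δ ∩ Γ) := by
      ext z; aesop
    rw [this, ncard_insert_of_notMem (fun h => hy h.1)]
    omega

theorem exists_swap_ncard_smul_inter_ne [Finite α] {Δ Γ : Set α} {a b c d : α} (ha : a ∈ Δ)
    (hb : b ∉ Δ) (hc : c ∈ Γ) (hd : d ∉ Γ) :
    ∃ x y : α, x ≠ y ∧ (swap x y • Δ ∩ Γ).ncard ≠ (Δ ∩ Γ).ncard := by
  obtain ⟨x, hx, y, hy, hxy⟩ := exists_mem_notMem_mem_iff_notMem ha hb hc hd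
  exact ⟨x, y, ne_of_mem_of_not_mem hx hy, ncard_swap_smul_inter_ne hx hy hxy⟩

end Equiv.Perm

theorem factor_transitive_of_alternating_le_general (n : ℕ) (hn : 3 ≤ n)
    (G A B : Subgroup (Equiv.Perm (Fin n)))
    (hG : alternatingGroup (Fin n) ≤ G)
    (hfact : (A : Set (Equiv.Perm (Fin n))) * (B : Set (Equiv.Perm (Fin n))) =
      (G : Set (Equiv.Perm (Fin n)))) :
    (∀ i j : Fin n, ∃ σ ∈ A, σ i = j) ∨ (∀ i j : Fin n, ∃ σ ∈ B, σ i = j) := by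
  by_contra! ⟨⟨i₀, j₀, h₀⟩, i₁, j₁, h₁⟩
  have hBA : (B : Set (Perm (Fin n))) * A = G := by
    rw [← inv_coe_set (H := G), ← hfact, mul_inv_rev, inv_coe_set, inv_coe_set]
  have hconst : ∀ g ∈ G, (g • orbit A i₀ ∩ orbit B i₁).ncard = (orbit A i₀ ∩ orbit B i₁).ncard :=
    fun g hg => ncard_smul_inter_of_mem_mul (le_stabilizer_orbit A i₀)
      (le_stabilizer_orbit B i₁) (hBA ▸ hg)
  obtain ⟨x, y, hxy, hs⟩ := Perm.exists_swap_mem_stabilizer (by simpa using hn) (orbit B i₁)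
  have hj₀ : j₀ ∉ orbit A i₀ := fun ⟨⟨σ, hσ⟩, h⟩ => h₀ σ hσ h
  have hj₁ : j₁ ∉ orbit B i₁ := fun ⟨⟨σ, hσ⟩, h⟩ => h₁ σ hσ h
  obtain ⟨u, v, huv, ht⟩ :=
    Perm.exists_swap_ncard_smul_inter_ne (mem_orbit_self i₀) hj₀ (mem_orbit_self i₁) hj₁
  apply ht
  rw [← ncard_smul_inter_of_mem_stabilizer hs, ← mul_smul]
  exact hconst _ (hG (by simp [Perm.sign_swap hxy, Perm.sign_swap huv]))

/-- If `A_n ≤ G ≤ S_n` with `n ≥ 3` and `G = AB` for subgroups `A, B ≤ G`, then at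
least one of `A` or `B` is transitive on the `n` points. -/
theorem factor_transitive_of_alternating_le (n : ℕ) (hn : 3 ≤ n)
    (G A B : Subgroup (Equiv.Perm (Fin n)))
    (hG : alternatingGroup (Fin n) ≤ G) (hA : A ≤ G) (hB : B ≤ G)
    (hfact : (A : Set (Equiv.Perm (Fin n))) * (B : Set (Equiv.Perm (Fin n))) =
      (G : Set (Equiv.Perm (Fin n)))) :
    (∀ i j : Fin n, ∃ σ ∈ A, σ i = j) ∨ (∀ i j : Fin n, ∃ σ ∈ B, σ i = j) :=
  factor_transitive_of_alternating_le_general n hn G A B hG hfact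
end
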